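/- Let P be an n×2 and Q an n×m joint probability matrix in standard form, with p = p₁ (the marginal of the first column of P), 0 < p < 1. Define μ_k = Σ_{x=1}^k (p_{x|1} − p_{x|2}) and ν_k^{(w)} = Σ_{x=1}^k (q_{x|w} − p_{x|2}). Then Q ≺_c P if and only if there exists a probability vector a = (a₁,...,a_m) such that for every w: (i) a_w ≤ q_w/p, and (ii) for all k = 1,...,n, a_w μ_k ≥ (q_w/p) ν_k^{(w)}. -/

import Mathlib

open Matrix Finset

/-- Row-stochastic matrix: nonnegative entries, each row sums to 1. -/
def RowStoch {ℓ m : ℕ} (T : Matrix (Fin ℓ) (Fin m) ℝ) : Prop :=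
  (∀ y w, 0 ≤ T y w) ∧ ∀ y, ∑ w, T y w = 1

/-- Doubly stochastic matrix. -/
def DStoch {n : ℕ} (D : Matrix (Fin n) (Fin n) ℝ) : Prop :=
  (∀ i j, 0 ≤ D i j) ∧ (∀ i, ∑ j, D i j = 1) ∧ (∀ j, ∑ i, D i j = 1)

/-- Conditional majorization `P ≻_c Q` via classical-conditioned random relabelings:
`Q = ∑ j, D j * P * R j` with each `D j` doubly stochastic, each `R j` entrywise
nonnegative, and `∑ j, R j` row-stochastic. -/
def CondMaj {n ℓ m : ℕ} (P : Matrix (Fin n) (Fin ℓ) ℝ)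
    (Q : Matrix (Fin n) (Fin m) ℝ) : Prop :=
  ∃ (J : ℕ) (D : Fin J → Matrix (Fin n) (Fin n) ℝ)
    (R : Fin J → Matrix (Fin ℓ) (Fin m) ℝ),
    (∀ j, DStoch (D j)) ∧ (∀ j y w, 0 ≤ R j y w) ∧
    RowStoch (∑ j, R j) ∧ Q = ∑ j, D j * P * R j

/-- Joint probability matrix: nonnegative entries summing to one. -/
def JointProb {n ℓ : ℕ} (P : Matrix (Fin n) (Fin ℓ) ℝ) : Prop :=
  (∀ x y, 0 ≤ P x y) ∧ ∑ x, ∑ y, P x y = 1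

/-- Column sum (marginal). -/
noncomputable def ColSum {n m : ℕ} (Q : Matrix (Fin n) (Fin m) ℝ) (w : Fin m) : ℝ :=
  ∑ x, Q x w
/-- Partial column sum of the first `k` entries of column `w`. -/
noncomputable def PartSum {n m : ℕ} (Q : Matrix (Fin n) (Fin m) ℝ) (k : ℕ) (w : Fin m) : ℝ :=
  ∑ x ∈ Finset.univ.filter (fun x : Fin n => (x : ℕ) < k), Q x w

/-- Standard form: columns sorted nonincreasingly, no zero columns, no column a
nonnegative multiple of another, and columns ordered by nonincreasing column sums,
ties broken lexicographically by nonincreasing partial sums. -/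
def StdForm {n m : ℕ} (Q : Matrix (Fin n) (Fin m) ℝ) : Prop :=
  (∀ w, ∀ x x' : Fin n, x ≤ x' → Q x' w ≤ Q x w) ∧
  (∀ w, ∃ x, Q x w ≠ 0) ∧
  (∀ w w' : Fin m, w ≠ w' → ∀ c : ℝ, 0 ≤ c → ¬ (∀ x, Q x w = c * Q x w')) ∧
  (∀ w w' : Fin m, w < w' →
    ColSum Q w' < ColSum Q w ∨
    (ColSum Q w' = ColSum Q w ∧ ∃ k : ℕ,
      (∀ j < k, PartSum Q j w = PartSum Q j w') ∧ PartSum Q k w' < PartSum Q k w))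
/-- `μ_k = ∑_{x ≤ k} (p_{x|1} - p_{x|2})`. -/
noncomputable def muP {n : ℕ} (P : Matrix (Fin n) (Fin 2) ℝ) (k : Fin n) : ℝ :=
  ∑ x ∈ Finset.univ.filter (fun x => x ≤ k), (P x 0 / ColSum P 0 - P x 1 / ColSum P 1)

/-- `ν_k^{(w)} = ∑_{x ≤ k} (q_{x|w} - p_{x|2})`. -/
noncomputable def nuPQ {n m : ℕ} (P : Matrix (Fin n) (Fin 2) ℝ)
    (Q : Matrix (Fin n) (Fin m) ℝ) (w : Fin m) (k : Fin n) : ℝ :=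
  ∑ x ∈ Finset.univ.filter (fun x => x ≤ k), (Q x w / ColSum Q w - P x 1 / ColSum P 1)

/-!
Conditional majorization by a two-column `P` reduces to one row-stochastic `2 × m` matrix `T`
(the paper's Lemma): a doubly stochastic matrix can only lower the prefix sums of a
nonincreasing vector, and conversely, by the Hardy–Littlewood–Pólya theorem, prefix domination
between vectors with equal totals, the dominated one nonincreasing, is realised by a doubly
stochastic matrix. Hence `Q ≺_c P` iff some `P * T` dominates `Q` column by column in prefix
sums. Hardy–Littlewood–Pólya follows by separating `u` from the compact convex set
`{D *ᵥ v | D doubly stochastic}` (compact by Birkhoff): sorting the separating functional and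
summing by parts shows that it cannot separate `u` from a permutation of `v`.

Comparing column sums forces the second row of `T` to be `t_w = (q_w - p a_w) / (1 - p)` once
the first row `a` is chosen, so (i) says `t_w ≥ 0` and (ii) is the prefix inequality rewritten
in terms of conditionals.
-/

theorem Finset.sum_mul_le_mul_sum_of_prefix_nonpos {ι : Type*} [LinearOrder ι]
    (s : Finset ι) {d w : ι → ℝ} (hd : Antitone d)
    (hw : ∀ k ∈ s, ∑ x ∈ s with x ≤ k, w x ≤ 0) {c : ℝ} (hc : ∀ x ∈ s, c ≤ d x) :
    ∑ x ∈ s, d x * w x ≤ c * ∑ x ∈ s, w x := by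
  induction s using Finset.induction_on_max generalizing c with
  | empty => simp
  | insert a s hlt ih =>
    have ha : a ∉ s := fun h => (hlt a h).false
    have hs : ∀ k ∈ s, ∑ x ∈ s with x ≤ k, w x ≤ 0 := by
      intro k hk
      have := hw k (mem_insert_of_mem hk)
      rwa [filter_insert, if_neg (hlt k hk).not_ge] at this
    have htot : w a + ∑ x ∈ s, w x ≤ 0 := by
      have := hw a (mem_insert_self a s)
      rwa [filter_insert, if_pos le_rfl, filter_true_of_mem fun x hx => (hlt x hx).le,
        sum_insert ha] at this
    have hda : ∑ x ∈ s, d x * w x ≤ d a * ∑ x ∈ s, w x :=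
      ih hs fun x hx => hd (hlt x hx).le
    rw [sum_insert ha, sum_insert ha]
    nlinarith [hc a (mem_insert_self a s)]

theorem Antitone.sum_mul_le_sum_mul_of_sum_Iic_le {ι : Type*} [Fintype ι] [LinearOrder ι]
    [LocallyFiniteOrderBot ι] {d u v : ι → ℝ} (hd : Antitone d)
    (hpre : ∀ k, ∑ x ∈ Iic k, u x ≤ ∑ x ∈ Iic k, v x) (htot : ∑ x, u x = ∑ x, v x) :
    ∑ x, d x * u x ≤ ∑ x, d x * v x := by
  classical
  obtain ⟨c, hc⟩ := (Set.finite_range d).bddBelow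
  have := univ.sum_mul_le_mul_sum_of_prefix_nonpos hd (w := u - v)
    (fun k _ => by simpa [filter_ge_eq_Iic, sum_sub_distrib] using hpre k)
    (c := c) fun x _ => hc ⟨x, rfl⟩
  simp only [Pi.sub_apply, mul_sub, sum_sub_distrib, htot, sub_self, mul_zero] at this
  linarith

theorem Finset.sum_le_sum_of_sum_Iic_le {ι : Type*} [Fintype ι] [LinearOrder ι]
    [LocallyFiniteOrderBot ι] {u v : ι → ℝ} (hpre : ∀ k, ∑ x ∈ Iic k, u x ≤ ∑ x ∈ Iic k, v x) :
    ∑ x, u x ≤ ∑ x, v x := by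
  cases isEmpty_or_nonempty ι
  · simp
  · have htop : Iic ((univ : Finset ι).max' univ_nonempty) = univ := eq_univ_of_forall fun x =>
      mem_Iic.2 (le_max' _ _ (mem_univ x))
    simpa [htop] using hpre (univ.max' univ_nonempty)

theorem sum_Iic_mulVec_le {ι : Type*} [Fintype ι] [LinearOrder ι] [LocallyFiniteOrderBot ι]
    {D : Matrix ι ι ℝ} (hD : D ∈ doublyStochastic ℝ ι) {v : ι → ℝ} (hv : Antitone v) (k : ι) :
    ∑ x ∈ Iic k, (D *ᵥ v) x ≤ ∑ x ∈ Iic k, v x := by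
  set c : ι → ℝ := fun y => ∑ x ∈ Iic k, D x y
  have hc : ∑ y, c y = #(Iic k) := by
    rw [sum_comm]; simp [sum_row_of_mem_doublyStochastic hD]
  -- the weights `c y ∈ [0, 1]` total `#(Iic k)`; centred at `v k`, they are dominated termwise
  -- by the indicator of `Iic k`
  have hterm : ∀ y, c y * (v y - v k) ≤ if y ∈ Iic k then v y - v k else 0 := by
    intro y
    split_ifs with hy
    · exact mul_le_of_le_one_left (sub_nonneg.2 (hv (mem_Iic.1 hy)))
        (le_trans (sum_le_sum_of_subset_of_nonneg (subset_univ _)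
          fun x _ _ => nonneg_of_mem_doublyStochastic hD) (sum_col_of_mem_doublyStochastic hD y).le)
    · exact mul_nonpos_of_nonneg_of_nonpos (sum_nonneg fun x _ => nonneg_of_mem_doublyStochastic hD)
        (sub_nonpos.2 (hv (le_of_not_ge (by simpa using hy))))
  have hsum := sum_le_sum fun y (_ : y ∈ univ) => hterm y
  simp only [sum_ite_mem, univ_inter, mul_sub, sum_sub_distrib, ← sum_mul, hc, sum_const,
    nsmul_eq_mul] at hsum
  have hlhs : ∑ x ∈ Iic k, (D *ᵥ v) x = ∑ y, c y * v y := by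
    simp only [c, mulVec, dotProduct, sum_mul]; exact sum_comm
  linarith

theorem Tuple.exists_perm_antitone {n : ℕ} {α : Type*} [LinearOrder α] (c : Fin n → α) :
    ∃ σ : Equiv.Perm (Fin n), Antitone (c ∘ σ) :=
  ⟨Fin.revPerm.trans (Tuple.sort c), (Tuple.monotone_sort c).comp_antitone Fin.rev_anti⟩

theorem exists_perm_sum_mul_le_of_sum_Iic_le {n : ℕ} {u v : Fin n → ℝ} (hu : Antitone u)
    (hpre : ∀ k, ∑ x ∈ Iic k, u x ≤ ∑ x ∈ Iic k, v x) (htot : ∑ x, u x = ∑ x, v x)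
    (c : Fin n → ℝ) : ∃ σ : Equiv.Perm (Fin n), ∑ x, c x * u x ≤ ∑ x, c x * v (σ x) := by
  obtain ⟨σ, hσ⟩ := Tuple.exists_perm_antitone c
  refine ⟨σ⁻¹, ?_⟩
  calc ∑ x, c x * u x = ∑ x, c (σ x) * u (σ x) := (Equiv.sum_comp σ _).symm
    _ ≤ ∑ x, c (σ x) * u x := (hσ.monovary hu).sum_mul_comp_perm_le_sum_mul
    _ ≤ ∑ x, c (σ x) * v x := hσ.sum_mul_le_sum_mul_of_sum_Iic_le hpre htot
    _ = ∑ x, c x * v (σ⁻¹ x) := by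
        rw [← Equiv.sum_comp σ fun x => c x * v (σ⁻¹ x)]; simp

theorem exists_mem_doublyStochastic_mulVec_eq {n : ℕ} {u v : Fin n → ℝ} (hu : Antitone u)
    (hpre : ∀ k, ∑ x ∈ Iic k, u x ≤ ∑ x ∈ Iic k, v x) (htot : ∑ x, u x = ∑ x, v x) :
    ∃ D ∈ doublyStochastic ℝ (Fin n), D *ᵥ v = u := by
  set K := (· *ᵥ v) '' (doublyStochastic ℝ (Fin n) : Set (Matrix (Fin n) (Fin n) ℝ))
  by_contra hnot
  have hconv : Convex ℝ K :=
    convex_doublyStochastic.is_linear_image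
      ⟨fun A B => Matrix.add_mulVec A B v, fun r A => Matrix.smul_mulVec r A v⟩
  have hclosed : IsClosed K := by
    refine (IsCompact.image ?_ (Continuous.matrix_mulVec continuous_id continuous_const)).isClosed
    rw [doublyStochastic_eq_convexHull_permMatrix]
    exact (Set.finite_range fun σ : Equiv.Perm (Fin n) => σ.permMatrix ℝ).isCompact_convexHull ℝ
  obtain ⟨f, s, hfK, hfu⟩ := geometric_hahn_banach_closed_point hconv hclosed hnot
  set c : Fin n → ℝ := fun i => f fun j => if i = j then 1 else 0
  have hf : ∀ x, f x = ∑ i, c i * x i := fun x => by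
    rw [← f.coe_coe, LinearMap.pi_apply_eq_sum_univ f.toLinearMap x]; simp [c, mul_comm]
  obtain ⟨σ, hσ⟩ := exists_perm_sum_mul_le_of_sum_Iic_le hu hpre htot c
  have hperm : v ∘ σ ∈ K := ⟨σ.permMatrix ℝ, permMatrix_mem_doublyStochastic, permMatrix_mulVec σ⟩
  have := hfK _ hperm
  rw [hf] at this hfu
  simp only [Function.comp_apply] at this
  linarith

theorem dStoch_iff_mem_doublyStochastic {n : ℕ} {D : Matrix (Fin n) (Fin n) ℝ} :
    DStoch D ↔ D ∈ doublyStochastic ℝ (Fin n) :=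
  mem_doublyStochastic_iff_sum.symm

theorem antitone_mul_apply {n ℓ m : ℕ} {P : Matrix (Fin n) (Fin ℓ) ℝ} {T : Matrix (Fin ℓ) (Fin m) ℝ}
    (hP : ∀ y, Antitone fun x => P x y) (hT : ∀ y w, 0 ≤ T y w) (w : Fin m) :
    Antitone fun x => (P * T) x w := by
  intro _ _ hab
  simp only [mul_apply]
  exact sum_le_sum fun y _ => mul_le_mul_of_nonneg_right (hP y hab) (hT y w)

theorem sum_colSum_mul_of_rowStoch {n ℓ m : ℕ} (P : Matrix (Fin n) (Fin ℓ) ℝ)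
    {T : Matrix (Fin ℓ) (Fin m) ℝ} (hT : RowStoch T) :
    ∑ w, ColSum (P * T) w = ∑ x, ∑ y, P x y := by
  simp only [ColSum, mul_apply]
  rw [sum_comm]
  refine sum_congr rfl fun x _ => ?_
  rw [sum_comm]
  simp [← mul_sum, hT.2]

theorem colSum_eq_of_sum_Iic_le {n ℓ m : ℕ} {P : Matrix (Fin n) (Fin ℓ) ℝ}
    {Q : Matrix (Fin n) (Fin m) ℝ} {T : Matrix (Fin ℓ) (Fin m) ℝ} (hT : RowStoch T)
    (htot : ∑ x, ∑ w, Q x w = ∑ x, ∑ y, P x y)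
    (hpre : ∀ w k, ∑ x ∈ Iic k, Q x w ≤ ∑ x ∈ Iic k, (P * T) x w) (w : Fin m) :
    ColSum Q w = ColSum (P * T) w := by
  have hle : ∀ w ∈ univ, ColSum Q w ≤ ColSum (P * T) w := fun w _ =>
    sum_le_sum_of_sum_Iic_le (hpre w)
  refine (sum_eq_sum_iff_of_le hle).1 ?_ w (mem_univ w)
  rw [sum_colSum_mul_of_rowStoch P hT, ← htot]
  exact sum_comm

theorem condMaj_iff_exists_rowStoch {n ℓ m : ℕ} {P : Matrix (Fin n) (Fin ℓ) ℝ}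
    {Q : Matrix (Fin n) (Fin m) ℝ} (hP : ∀ y, Antitone fun x => P x y)
    (hQ : ∀ w, Antitone fun x => Q x w) (htot : ∑ x, ∑ w, Q x w = ∑ x, ∑ y, P x y) :
    CondMaj P Q ↔ ∃ T : Matrix (Fin ℓ) (Fin m) ℝ,
      RowStoch T ∧ ∀ w k, ∑ x ∈ Iic k, Q x w ≤ ∑ x ∈ Iic k, (P * T) x w := by
  constructor
  · rintro ⟨J, D, R, hD, hR, hT, rfl⟩
    refine ⟨∑ j, R j, hT, fun w k => ?_⟩
    calc ∑ x ∈ Iic k, (∑ j, D j * P * R j) x w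
        = ∑ j, ∑ x ∈ Iic k, (D j * (P * R j)) x w := by
          simp only [Matrix.sum_apply, Matrix.mul_assoc]; exact sum_comm
      _ ≤ ∑ j, ∑ x ∈ Iic k, (P * R j) x w := sum_le_sum fun j _ =>
          sum_Iic_mulVec_le (dStoch_iff_mem_doublyStochastic.1 (hD j))
            (antitone_mul_apply hP (hR j) w) k
      _ = ∑ x ∈ Iic k, (P * ∑ j, R j) x w := by
          simp only [Matrix.mul_sum, Matrix.sum_apply]; exact sum_comm
  · rintro ⟨T, hT, hpre⟩
    choose D hD hDQ using fun w => exists_mem_doublyStochastic_mulVec_eq (hQ w) (hpre w)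
      (colSum_eq_of_sum_Iic_le hT htot hpre w)
    have hsum : ∑ w, Matrix.of (fun y => Pi.single w (T y w)) = T := by
      ext y w
      simp [Matrix.sum_apply]
    -- `R w` keeps only column `w` of `T`, the column on which `D w` is to act
    refine ⟨m, D, fun w => Matrix.of fun y => (Pi.single w (T y w) : Fin m → ℝ),
      fun w => dStoch_iff_mem_doublyStochastic.2 (hD w),
      fun w y w' => (Pi.single_nonneg.2 (hT.1 y w) : (0 : Fin m → ℝ) ≤ _) w', by rwa [hsum], ?_⟩
    ext x w
    rw [← congrFun (hDQ w) x]
    simp only [mulVec, dotProduct, mul_apply, mul_sum, Matrix.sum_apply, of_apply,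
      Pi.single_apply, mul_ite, sum_mul, mul_assoc, mul_zero, sum_ite_irrel, sum_const_zero,
      sum_ite_eq, mem_univ, if_true]
    exact sum_comm

theorem colSum_pos {n m : ℕ} {Q : Matrix (Fin n) (Fin m) ℝ} (hQ : ∀ x w, 0 ≤ Q x w) {w : Fin m}
    (hw : ∃ x, Q x w ≠ 0) : 0 < ColSum Q w :=
  let ⟨x, hx⟩ := hw
  sum_pos' (fun x _ => hQ x w) ⟨x, mem_univ x, (hQ x w).lt_of_ne' hx⟩

theorem colSum_zero_add_colSum_one {n : ℕ} (P : Matrix (Fin n) (Fin 2) ℝ) :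
    ColSum P 0 + ColSum P 1 = ∑ x, ∑ y, P x y := by
  simp only [ColSum, Fin.sum_univ_two, sum_add_distrib]

theorem mul_nuPQ_le_mul_muP_iff {n m : ℕ} {P : Matrix (Fin n) (Fin 2) ℝ}
    {Q : Matrix (Fin n) (Fin m) ℝ} {w : Fin m} {a t : ℝ} (hp0 : 0 < ColSum P 0)
    (hp1 : 0 < ColSum P 1) (hq : 0 < ColSum Q w)
    (hcol : ColSum Q w = ColSum P 0 * a + ColSum P 1 * t) (k : Fin n) :
    ColSum Q w / ColSum P 0 * nuPQ P Q w k ≤ a * muP P k ↔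
      ∑ x ∈ Iic k, Q x w ≤ ∑ x ∈ Iic k, (P x 0 * a + P x 1 * t) := by
  simp only [muP, nuPQ, filter_ge_eq_Iic, sum_sub_distrib, ← sum_div, sum_add_distrib, ← sum_mul]
  generalize ∑ x ∈ Iic k, Q x w = A, ∑ x ∈ Iic k, P x 0 = C, ∑ x ∈ Iic k, P x 1 = B
  generalize ColSum P 0 = p, ColSum P 1 = p', ColSum Q w = q at *
  rw [← sub_nonneg, ← sub_nonneg (b := A)]
  have : a * (C / p - B / p') - q / p * (A / q - B / p') = (C * a + B * t - A) / p := by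
    field_simp
    linear_combination B * hcol
  rw [this, le_div_iff₀ hp0, zero_mul]

theorem mul_apply_fin_two {n m : ℕ} (P : Matrix (Fin n) (Fin 2) ℝ)
    (T : Matrix (Fin 2) (Fin m) ℝ) (x : Fin n) (w : Fin m) :
    (P * T) x w = P x 0 * T 0 w + P x 1 * T 1 w := by
  rw [mul_apply, Fin.sum_univ_two]

theorem colSum_mul_fin_two {n m : ℕ} (P : Matrix (Fin n) (Fin 2) ℝ)
    (T : Matrix (Fin 2) (Fin m) ℝ) (w : Fin m) :
    ColSum (P * T) w = ColSum P 0 * T 0 w + ColSum P 1 * T 1 w := by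
  simp only [ColSum, mul_apply_fin_two, sum_add_distrib, sum_mul]

theorem rowStoch_of_le_colSum_div {n m : ℕ} {P : Matrix (Fin n) (Fin 2) ℝ}
    {Q : Matrix (Fin n) (Fin m) ℝ} {a : Fin m → ℝ} (hp : ColSum P 0 + ColSum P 1 = 1)
    (hp0 : 0 < ColSum P 0) (hp1 : 0 < ColSum P 1) (hQ : ∑ w, ColSum Q w = 1)
    (ha0 : ∀ w, 0 ≤ a w) (ha1 : ∑ w, a w = 1) (ha : ∀ w, a w ≤ ColSum Q w / ColSum P 0) :
    RowStoch (Matrix.of ![a, fun w => (ColSum Q w - ColSum P 0 * a w) / ColSum P 1]) := by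
  refine ⟨fun y w => ?_, fun y => ?_⟩ <;> fin_cases y
  · exact ha0 w
  · exact div_nonneg (sub_nonneg.2 ((le_div_iff₀' hp0).1 (ha w))) hp1.le
  · exact ha1
  · simp only [Fin.mk_one, of_apply, Matrix.cons_val_one, Matrix.cons_val_zero]
    rw [← sum_div, sum_sub_distrib, ← mul_sum, hQ, ha1, div_eq_one_iff_eq hp1.ne']
    linarith

theorem stmt13 {n m : ℕ} (P : Matrix (Fin n) (Fin 2) ℝ) (Q : Matrix (Fin n) (Fin m) ℝ)
    (hP : JointProb P) (hQ : JointProb Q) (hPstd : StdForm P) (hQstd : StdForm Q)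
    (hp0 : 0 < ColSum P 0) (hp1 : ColSum P 0 < 1) :
    CondMaj P Q ↔
      ∃ a : Fin m → ℝ, (∀ w, 0 ≤ a w) ∧ (∑ w, a w = 1) ∧
        ∀ w, a w ≤ ColSum Q w / ColSum P 0 ∧
          ∀ k : Fin n, (ColSum Q w / ColSum P 0) * nuPQ P Q w k ≤ a w * muP P k := by
  have hp : ColSum P 0 + ColSum P 1 = 1 := (colSum_zero_add_colSum_one P).trans hP.2
  have hp1' : 0 < ColSum P 1 := by linarith
  have htot : ∑ x, ∑ w, Q x w = ∑ x, ∑ y, P x y := hQ.2.trans hP.2.symm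
  have hq : ∀ w, 0 < ColSum Q w := fun w => colSum_pos hQ.1 (hQstd.2.1 w)
  rw [condMaj_iff_exists_rowStoch hPstd.1 hQstd.1 htot]
  constructor
  · rintro ⟨T, hT, hpre⟩
    have hcol : ∀ w, ColSum Q w = ColSum P 0 * T 0 w + ColSum P 1 * T 1 w := fun w =>
      (colSum_eq_of_sum_Iic_le hT htot hpre w).trans (colSum_mul_fin_two P T w)
    refine ⟨T 0, hT.1 0, hT.2 0, fun w => ⟨?_, fun k => ?_⟩⟩
    · rw [le_div_iff₀' hp0]
      nlinarith [hT.1 1 w, hcol w]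
    · rw [mul_nuPQ_le_mul_muP_iff hp0 hp1' (hq w) (hcol w)]
      simpa only [mul_apply_fin_two] using hpre w k
  · rintro ⟨a, ha0, ha1, ha⟩
    set t := fun w => (ColSum Q w - ColSum P 0 * a w) / ColSum P 1
    refine ⟨Matrix.of ![a, t], rowStoch_of_le_colSum_div hp hp0 hp1' (sum_comm.trans hQ.2) ha0
      ha1 (fun w => (ha w).1), fun w k => ?_⟩
    have hcol : ColSum Q w = ColSum P 0 * a w + ColSum P 1 * t w := by
      simp only [t]; field_simp; ring
    simpa [mul_apply_fin_two] using (mul_nuPQ_le_mul_muP_iff hp0 hp1' (hq w) hcol k).1 ((ha w).2 k)
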